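/- Let $X$ and $Y$ be independent nonnegative random variables with regularly varying survival functions of the same index $-a < 0$. Then $\mathbb{P}(X + Y > t) \sim \mathbb{P}(X > t) + \mathbb{P}(Y > t)$ as $t \to \infty$, and hence $X+Y$ has a regularly varying tail of index $-a$. -/

import Mathlib

/-!
Write `F`, `G` for the tails of `X`, `Y`. Since `X, Y ≥ 0`, independence gives
`P(X + Y > t) ≥ P({X > t} ∪ {Y > t}) = F t + G t - F t * G t`. For `0 < δ < 1`, the event
`X + Y > t` forces `X > (1 - δ) t`, or `Y > (1 - δ) t`, or both `X > δ t` and `Y > δ t`, so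
`P(X + Y > t) ≤ F((1 - δ) t) + G((1 - δ) t) + F(δ t) G(δ t)`.
The sum `F + G` is regularly varying of index `-a` (its ratio is a mediant of the two ratios),
so after dividing by `F t + G t` the lower bound tends to `1` and the upper one to
`(1 - δ) ^ (-a)`, which tends to `1` as `δ → 0`. Regular variation of `P(X + Y > t)` follows,
since it is inherited along asymptotic equivalence.
-/

open MeasureTheory ProbabilityTheory Filter Topology

def IsRegularlyVarying (f : ℝ → ℝ) (ρ : ℝ) : Prop :=
  ∀ l > 0, Tendsto (fun t => f (l * t) / f t) atTop (𝓝 (l ^ ρ))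

theorem min_div_le_add_div_add {p q r s : ℝ} (hr : 0 < r) (hs : 0 < s) :
    min (p / r) (q / s) ≤ (p + q) / (r + s) := by
  have hp := (le_div_iff₀ hr).1 (min_le_left (p / r) (q / s))
  have hq := (le_div_iff₀ hs).1 (min_le_right (p / r) (q / s))
  rw [le_div_iff₀ (add_pos hr hs)]
  linarith

theorem add_div_add_le_max {p q r s : ℝ} (hr : 0 < r) (hs : 0 < s) :
    (p + q) / (r + s) ≤ max (p / r) (q / s) := by
  have hp := (div_le_iff₀ hr).1 (le_max_left (p / r) (q / s))
  have hq := (div_le_iff₀ hs).1 (le_max_right (p / r) (q / s))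
  rw [div_le_iff₀ (add_pos hr hs)]
  linarith

theorem tendsto_of_tendsto_of_le_of_family_le {ι β α : Type*} [LinearOrder α]
    [TopologicalSpace α] [OrderTopology α] {l : Filter ι} {p : Filter β} [p.NeBot]
    {u lo : ι → α} {U : β → ι → α} {c : β → α} {x : α}
    (hlo : Tendsto lo l (𝓝 x)) (hlo_le : ∀ᶠ t in l, lo t ≤ u t)
    (hc : Tendsto c p (𝓝 x)) (hU : ∀ᶠ δ in p, Tendsto (U δ) l (𝓝 (c δ)))
    (hU_le : ∀ᶠ δ in p, ∀ᶠ t in l, u t ≤ U δ t) :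
    Tendsto u l (𝓝 x) := by
  refine tendsto_order.2 ⟨fun b hb => ?_, fun b hb => ?_⟩
  · filter_upwards [hlo.eventually (lt_mem_nhds hb), hlo_le] with t h₁ h₂ using h₁.trans_le h₂
  · obtain ⟨δ, hcδ, hUδ, huδ⟩ := ((hc.eventually (gt_mem_nhds hb)).and (hU.and hU_le)).exists
    filter_upwards [hUδ.eventually (gt_mem_nhds hcδ), huδ] with t h₁ h₂ using h₂.trans_lt h₁

theorem eventually_pos_of_eq_rpow_mul {f L : ℝ → ℝ} {ρ : ℝ} (hL : ∀ t > 0, 0 < L t)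
    (hf : ∀ t > 0, f t = t ^ ρ * L t) : ∀ᶠ t in atTop, 0 < f t := by
  filter_upwards [eventually_gt_atTop 0] with t ht
  rw [hf t ht]
  exact mul_pos (Real.rpow_pos_of_pos ht ρ) (hL t ht)

namespace IsRegularlyVarying

theorem of_eq_rpow_mul {f L : ℝ → ℝ} {ρ : ℝ} (hL : ∀ t > 0, L t ≠ 0)
    (hSV : ∀ l > 0, Tendsto (fun t => L (l * t) / L t) atTop (𝓝 1))
    (hf : ∀ t > 0, f t = t ^ ρ * L t) : IsRegularlyVarying f ρ := by
  intro l hl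
  have h := (hSV l hl).const_mul (l ^ ρ)
  rw [mul_one] at h
  refine h.congr' ?_
  filter_upwards [eventually_gt_atTop 0] with t ht
  rw [hf _ (mul_pos hl ht), hf t ht, Real.mul_rpow hl.le ht.le]
  have := (Real.rpow_pos_of_pos ht ρ).ne'
  have := hL t ht
  field_simp

theorem add {f g : ℝ → ℝ} {ρ : ℝ} (hf : IsRegularlyVarying f ρ) (hg : IsRegularlyVarying g ρ)
    (hf₀ : ∀ᶠ t in atTop, 0 < f t) (hg₀ : ∀ᶠ t in atTop, 0 < g t) :
    IsRegularlyVarying (f + g) ρ := by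
  intro l hl
  have hmin := (hf l hl).min (hg l hl)
  have hmax := (hf l hl).max (hg l hl)
  rw [min_self] at hmin
  rw [max_self] at hmax
  refine tendsto_of_tendsto_of_tendsto_of_le_of_le' hmin hmax ?_ ?_ <;>
    filter_upwards [hf₀, hg₀] with t hft hgt
  exacts [min_div_le_add_div_add hft hgt, add_div_add_le_max hft hgt]

theorem of_tendsto_div {f g : ℝ → ℝ} {ρ : ℝ} (hg : IsRegularlyVarying g ρ)
    (hg₀ : ∀ᶠ t in atTop, g t ≠ 0) (hfg : Tendsto (fun t => f t / g t) atTop (𝓝 1)) :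
    IsRegularlyVarying f ρ := by
  intro l hl
  have hlt : Tendsto (l * ·) atTop atTop := tendsto_id.const_mul_atTop hl
  have hf₀ : ∀ᶠ t in atTop, f t ≠ 0 :=
    (hfg.eventually_ne one_ne_zero).mono fun t ht hft => ht (by simp [hft])
  have h := ((hfg.comp hlt).mul (hg l hl)).mul (hfg.inv₀ one_ne_zero)
  rw [one_mul, inv_one, mul_one] at h
  refine h.congr' ?_
  filter_upwards [hf₀, hg₀, hlt.eventually hg₀] with t hft hgt hglt
  simp only [Function.comp_apply, inv_div]
  field_simp

end IsRegularlyVarying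

theorem tendsto_div_add_of_bounds {fX fY fS : ℝ → ℝ} {ρ : ℝ}
    (hg : IsRegularlyVarying (fX + fY) ρ) (hg₀ : ∀ᶠ t in atTop, 0 < fX t + fY t)
    (hY : Tendsto fY atTop (𝓝 0))
    (hlow : ∀ t, fX t + fY t - fX t * fY t ≤ fS t)
    (hup : ∀ δ t, fS t ≤ fX ((1 - δ) * t) + fY ((1 - δ) * t) + fX (δ * t) * fY (δ * t)) :
    Tendsto (fun t => fS t / (fX t + fY t)) atTop (𝓝 1) := by
  have hc : Tendsto (fun δ : ℝ => (1 - δ) ^ ρ) (𝓝[>] 0) (𝓝 1) := by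
    have := ((continuousAt_const.sub continuousAt_id).rpow_const
      (Or.inl (by norm_num : (1 : ℝ) - 0 ≠ 0)) : ContinuousAt (fun δ : ℝ => (1 - δ) ^ ρ) 0)
    simpa using this.tendsto.mono_left nhdsWithin_le_nhds
  refine tendsto_of_tendsto_of_le_of_family_le (lo := fun t => 1 - fY t) (p := 𝓝[>] 0)
    (U := fun δ t =>
      (fX + fY) ((1 - δ) * t) / (fX + fY) t + (fX + fY) (δ * t) / (fX + fY) t * fY (δ * t))
    (by simpa using hY.const_sub 1) ?_ hc ?_ ?_
  · filter_upwards [hg₀] with t ht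
    rw [le_div_iff₀ ht]
    nlinarith [hlow t, sq_nonneg (fY t)]
  · filter_upwards [Ioo_mem_nhdsGT one_pos] with δ hδ
    have hδt : Tendsto (δ * ·) atTop atTop := tendsto_id.const_mul_atTop hδ.1
    simpa using (hg (1 - δ) (by linarith [hδ.2])).add ((hg δ hδ.1).mul (hY.comp hδt))
  · refine Eventually.of_forall fun δ => ?_
    filter_upwards [hg₀] with t ht
    simp only [Pi.add_apply]
    rw [div_mul_eq_mul_div, ← add_div, div_le_div_iff_of_pos_right ht]
    nlinarith [hup δ t, sq_nonneg (fY (δ * t))]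

section Tails

variable {Ω : Type*} [MeasurableSpace Ω] {P : Measure Ω} {X Y : Ω → ℝ}

theorem tendsto_measureReal_gt_atTop [IsFiniteMeasure P] (hX : AEMeasurable X P) :
    Tendsto (fun t => P.real {ω | X ω > t}) atTop (𝓝 0) := by
  have h : Tendsto (fun t => P {ω | X ω > t}) atTop (𝓝 (P (⋂ t : ℝ, {ω | X ω > t}))) :=
    tendsto_measure_iInter_atTop (fun t => hX.nullMeasurable measurableSet_Ioi)
      (fun s t hst ω hω => hst.trans_lt hω) ⟨0, measure_ne_top P _⟩
  have hempty : ⋂ t : ℝ, {ω | X ω > t} = ∅ :=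
    Set.eq_empty_of_forall_notMem fun ω hω => lt_irrefl (X ω) (Set.mem_iInter.1 hω (X ω) :)
  rw [hempty, measure_empty] at h
  exact (ENNReal.tendsto_toReal ENNReal.zero_ne_top).comp h

namespace ProbabilityTheory.IndepFun

theorem measureReal_gt_inter_gt (hXY : IndepFun X Y P) (s u : ℝ) :
    P.real ({ω | X ω > s} ∩ {ω | Y ω > u}) = P.real {ω | X ω > s} * P.real {ω | Y ω > u} := by
  simp only [measureReal_def, ← ENNReal.toReal_mul]
  exact congrArg _ (hXY.measure_inter_preimage_eq_mul _ _ measurableSet_Ioi measurableSet_Ioi)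

variable [IsFiniteMeasure P]

theorem measureReal_gt_add_sub_mul_le (hXY : IndepFun X Y P)
    (hY : Measurable Y) (hX₀ : ∀ ω, 0 ≤ X ω) (hY₀ : ∀ ω, 0 ≤ Y ω) (t : ℝ) :
    P.real {ω | X ω > t} + P.real {ω | Y ω > t} - P.real {ω | X ω > t} * P.real {ω | Y ω > t}
      ≤ P.real {ω | X ω + Y ω > t} := by
  rw [← hXY.measureReal_gt_inter_gt,
    ← measureReal_union_add_inter (t := {ω | Y ω > t}) (hY measurableSet_Ioi), add_sub_cancel_right]
  refine measureReal_mono ?_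
  rintro ω (hω | hω)
  · exact hω.trans_le (le_add_of_nonneg_right (hY₀ ω))
  · exact hω.trans_le (le_add_of_nonneg_left (hX₀ ω))

theorem measureReal_add_gt_le (hXY : IndepFun X Y P) (δ t : ℝ) :
    P.real {ω | X ω + Y ω > t} ≤ P.real {ω | X ω > (1 - δ) * t} + P.real {ω | Y ω > (1 - δ) * t}
      + P.real {ω | X ω > δ * t} * P.real {ω | Y ω > δ * t} := by
  rw [← hXY.measureReal_gt_inter_gt]
  refine (measureReal_mono ?_).trans
    ((measureReal_union_le _ _).trans (add_le_add_left (measureReal_union_le _ _) _))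
  intro ω hω
  simp only [Set.mem_union, Set.mem_inter_iff, Set.mem_ofPred_eq] at hω ⊢
  by_cases hXω : X ω > (1 - δ) * t
  · exact .inl (.inl hXω)
  by_cases hYω : Y ω > (1 - δ) * t
  · exact .inl (.inr hYω)
  exact .inr ⟨by linarith, by linarith⟩

end ProbabilityTheory.IndepFun

end Tails

theorem sum_regularly_varying_tails_general
    {Ω : Type*} [MeasureSpace Ω] (P : Measure Ω) [IsProbabilityMeasure P]
    (X Y : Ω → ℝ) (hY : Measurable Y)
    (hXnn : ∀ ω, 0 ≤ X ω) (hYnn : ∀ ω, 0 ≤ Y ω)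
    (hindep : IndepFun X Y P)
    (a : ℝ)
    (LX LY : ℝ → ℝ) (hLXpos : ∀ t > 0, 0 < LX t) (hLYpos : ∀ t > 0, 0 < LY t)
    (hSVX : ∀ l > 0, Tendsto (fun t => LX (l * t) / LX t) atTop (nhds 1))
    (hSVY : ∀ l > 0, Tendsto (fun t => LY (l * t) / LY t) atTop (nhds 1))
    (htailX : ∀ t > 0, (P {ω | X ω > t}).toReal = t ^ (-a) * LX t)
    (htailY : ∀ t > 0, (P {ω | Y ω > t}).toReal = t ^ (-a) * LY t) :
    Tendsto
      (fun t => (P {ω | X ω + Y ω > t}).toReal /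
        ((P {ω | X ω > t}).toReal + (P {ω | Y ω > t}).toReal))
      atTop (nhds 1) ∧
    ∀ l > 0,
      Tendsto
        (fun t => (P {ω | X ω + Y ω > l * t}).toReal /
          (P {ω | X ω + Y ω > t}).toReal)
        atTop (nhds (l ^ (-a))) := by
  simp only [← measureReal_def] at htailX htailY ⊢
  have hX₀ := eventually_pos_of_eq_rpow_mul hLXpos htailX
  have hY₀ := eventually_pos_of_eq_rpow_mul hLYpos htailY
  have hRV := (IsRegularlyVarying.of_eq_rpow_mul (fun t ht => (hLXpos t ht).ne') hSVX htailX).add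
    (.of_eq_rpow_mul (fun t ht => (hLYpos t ht).ne') hSVY htailY) hX₀ hY₀
  have hpos := (hX₀.and hY₀).mono fun t ht => add_pos ht.1 ht.2
  have hequiv := tendsto_div_add_of_bounds hRV hpos (tendsto_measureReal_gt_atTop hY.aemeasurable)
    (hindep.measureReal_gt_add_sub_mul_le hY hXnn hYnn) hindep.measureReal_add_gt_le
  exact ⟨hequiv, hRV.of_tendsto_div (hpos.mono fun t ht => ht.ne') hequiv⟩

/-- Convolution closure of regularly varying tails: for independent nonnegative
`X, Y` with regularly varying tails of the same index `-a`,
`P(X+Y>t) ~ P(X>t)+P(Y>t)` and `X+Y` has a regularly varying tail of index `-a`. -/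
theorem sum_regularly_varying_tails
    {Ω : Type*} [MeasureSpace Ω] (P : Measure Ω) [IsProbabilityMeasure P]
    (X Y : Ω → ℝ) (hX : Measurable X) (hY : Measurable Y)
    (hXnn : ∀ ω, 0 ≤ X ω) (hYnn : ∀ ω, 0 ≤ Y ω)
    (hindep : IndepFun X Y P)
    (a : ℝ) (ha : 0 < a)
    (LX LY : ℝ → ℝ) (hLXpos : ∀ t > 0, 0 < LX t) (hLYpos : ∀ t > 0, 0 < LY t)
    (hSVX : ∀ l > 0, Tendsto (fun t => LX (l * t) / LX t) atTop (nhds 1))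
    (hSVY : ∀ l > 0, Tendsto (fun t => LY (l * t) / LY t) atTop (nhds 1))
    (htailX : ∀ t > 0, (P {ω | X ω > t}).toReal = t ^ (-a) * LX t)
    (htailY : ∀ t > 0, (P {ω | Y ω > t}).toReal = t ^ (-a) * LY t) :
    Tendsto
      (fun t => (P {ω | X ω + Y ω > t}).toReal /
        ((P {ω | X ω > t}).toReal + (P {ω | Y ω > t}).toReal))
      atTop (nhds 1) ∧
    ∀ l > 0,
      Tendsto
        (fun t => (P {ω | X ω + Y ω > l * t}).toReal /
          (P {ω | X ω + Y ω > t}).toReal)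
        atTop (nhds (l ^ (-a))) :=
  sum_regularly_varying_tails_general P X Y hY hXnn hYnn hindep a LX LY hLXpos hLYpos hSVX hSVY
    htailX htailY
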